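/- arXiv:2404.06697 — 3 statements merged into one kernel-verified Lean document; each statement's English description precedes it below -/
import Mathlib

section
/- For every integer a, the homogeneous component of B in bidegree (a, a−1) is zero, and the homogeneous component of B in bidegree (a, a−2) is zero. -/
/-- Index type for the `ℤ/2`-basis of Stong's ring `M`:  `Sum.inl (i,j)` indexes the
positive-cone basis element `x₂^i·y₂^j`, and `Sum.inr (n,m)` indexes the negative-cone basis
element `θ₂/(x₂^n·y₂^m)`. -/
abbrev MIdx : Type := (ℕ × ℕ) ⊕ (ℕ × ℕ)

/-- Index type for the `ℤ/2`-basis of `B = M[c,b]/(c²-x₂c-y₂b)`:  a basis element of `M`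
together with a monomial `b^p` (`Sum.inl p`) or `c·b^p` (`Sum.inr p`). -/
abbrev BIdx : Type := MIdx × (ℕ ⊕ ℕ)

/-- The `ℤ×ℤ`-degree of each basis element of `B`:  `x₂^i·y₂^j` has degree `(-j, i+j)`,
`θ₂/(x₂^n·y₂^m)` has degree `(2+m, -2-n-m)`, `deg c = (0,1)` and `deg b = (1,1)`. -/
def bdeg : BIdx → ℤ × ℤ
  | (Sum.inl (i, j), Sum.inl p) => ((p : ℤ) - (j : ℤ), (i : ℤ) + (j : ℤ) + (p : ℤ))
  | (Sum.inl (i, j), Sum.inr p) => ((p : ℤ) - (j : ℤ), (i : ℤ) + (j : ℤ) + (p : ℤ) + 1)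
  | (Sum.inr (n, m), Sum.inl p) => (2 + (m : ℤ) + (p : ℤ), (p : ℤ) - 2 - (n : ℤ) - (m : ℤ))
  | (Sum.inr (n, m), Sum.inr p) => (2 + (m : ℤ) + (p : ℤ), (p : ℤ) - 2 - (n : ℤ) - (m : ℤ) + 1)

/-! A homogeneous basis of `B` has its degrees `(r, s)` in two cones: the positive-cone elements
`x₂^i y₂^j b^p` and `x₂^i y₂^j c b^p` satisfy `s - r = i + 2j (+ 1) ≥ 0`, the negative-cone elements
`θ₂/(x₂^n y₂^m) b^p` and `θ₂/(x₂^n y₂^m) c b^p` satisfy `s - r = -4 - n - 2m (+ 1) ≤ -3`.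
So no basis element lies on the lines `s = r - 1`, `s = r - 2`. A graded component containing no
basis element vanishes: it is independent of the sum of the other components, and that sum
contains the whole basis, hence is everything. -/

theorem DirectSum.Decomposition.eq_bot_of_notMem_range {ι R M ι' : Type*} [DecidableEq ι']
    [Semiring R] [AddCommMonoid M] [Module R M] (𝒜 : ι' → Submodule R M)
    [DirectSum.Decomposition 𝒜] (v : ι → M) (hv : Submodule.span R (Set.range v) = ⊤)
    (deg : ι → ι') (hdeg : ∀ k, v k ∈ 𝒜 (deg k)) {d : ι'} (hd : d ∉ Set.range deg) :
    𝒜 d = ⊥ := by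
  have hrest : ⨆ (j) (_ : j ≠ d), 𝒜 j = ⊤ := by
    refine eq_top_iff.2 (hv ▸ Submodule.span_le.2 ?_)
    rintro _ ⟨k, rfl⟩
    exact Submodule.mem_iSup_of_mem (deg k)
      (Submodule.mem_iSup_of_mem (fun h ↦ hd ⟨k, h⟩) (hdeg k))
  have hdisj := (DirectSum.Decomposition.isInternal 𝒜).submodule_iSupIndep d
  rwa [hrest, disjoint_top] at hdisj

theorem bdeg_snd_sub_fst_nonneg_or_le_neg_three (k : BIdx) :
    0 ≤ (bdeg k).2 - (bdeg k).1 ∨ (bdeg k).2 - (bdeg k).1 ≤ -3 := by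
  rcases k with ⟨⟨i, j⟩ | ⟨n, m⟩, p | p⟩ <;> simp only [bdeg] <;> omega

theorem component_eq_bot_of_gap_general
    -- `B = M[c,b]/(c² - x₂·c - y₂·b)` is a commutative graded `M`-algebra:
    (B : Type) [CommRing B] [Algebra (ZMod 2) B]
    -- `B` is free over `ℤ/2` on the products of basis elements of `M` with the
    -- monomials `b^p` and `c·b^p`:
    (bas : Module.Basis BIdx (ZMod 2) B)
    -- the `ℤ×ℤ`-grading of `B`, for which each of the above basis elements is homogeneous
    -- of the expected degree:
    (𝒜 : ℤ × ℤ → Submodule (ZMod 2) B) [GradedAlgebra 𝒜]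
    (hdeg : ∀ k : BIdx, bas k ∈ 𝒜 (bdeg k))
    :
    ∀ a : ℤ, 𝒜 (a, a - 1) = ⊥ ∧ 𝒜 (a, a - 2) = ⊥ := by
  have hgap : ∀ a e : ℤ, (e = 1 ∨ e = 2) → 𝒜 (a, a - e) = ⊥ := by
    intro a e he
    refine DirectSum.Decomposition.eq_bot_of_notMem_range 𝒜 bas bas.span_eq bdeg hdeg ?_
    rintro ⟨k, hk⟩
    have := bdeg_snd_sub_fst_nonneg_or_le_neg_three k
    rw [hk] at this
    omega
  exact fun a ↦ ⟨hgap a 1 (Or.inl rfl), hgap a 2 (Or.inr rfl)⟩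

/-- (Lemma 2.13 of the paper.)  For every integer `a`, the homogeneous
component of `B` in bidegree `(a, a-1)` is zero, and the homogeneous component of `B` in
bidegree `(a, a-2)` is zero. -/
theorem component_eq_bot_of_gap
    -- `M` is Stong's `RO(C₂)`-graded Bredon cohomology ring of a point:
    -- a commutative `ℤ/2`-algebra, free on the basis `x₂^i·y₂^j`, `θ₂/(x₂^n·y₂^m)` ...
    (M : Type) [CommRing M] [Algebra (ZMod 2) M]
    (basM : Module.Basis MIdx (ZMod 2) M)
    (hMone : basM (Sum.inl (0, 0)) = 1)
    -- ... with positive-cone elements multiplying as monomials in `F₂[x₂,y₂]` ...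
    (hMmul₁ : ∀ i j i' j' : ℕ,
      basM (Sum.inl (i, j)) * basM (Sum.inl (i', j')) = basM (Sum.inl (i + i', j + j')))
    -- ... with `x₂^i·y₂^j · θ₂/(x₂^n·y₂^m) = θ₂/(x₂^{n-i}·y₂^{m-j})` if `i ≤ n` and `j ≤ m`,
    -- and `= 0` otherwise ...
    (hMmul₂ : ∀ i j n m : ℕ,
      basM (Sum.inl (i, j)) * basM (Sum.inr (n, m)) =
        if i ≤ n ∧ j ≤ m then basM (Sum.inr (n - i, m - j)) else 0)
    -- ... and with the product of any two negative-cone basis elements equal to `0`.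
    (hMmul₃ : ∀ nm nm' : ℕ × ℕ, basM (Sum.inr nm) * basM (Sum.inr nm') = 0)
    -- `B = M[c,b]/(c² - x₂·c - y₂·b)` is a commutative graded `M`-algebra:
    (B : Type) [CommRing B] [Algebra (ZMod 2) B] [Algebra M B]
    (x₂ y₂ c bb : B) (θ : ℕ → ℕ → B)
    (hx₂ : ∀ i j : ℕ, algebraMap M B (basM (Sum.inl (i, j))) = x₂ ^ i * y₂ ^ j)
    (hθ : ∀ n m : ℕ, algebraMap M B (basM (Sum.inr (n, m))) = θ n m)
    (hrel : c ^ 2 - x₂ * c - y₂ * bb = 0)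
    -- `B` is free over `ℤ/2` on the products of basis elements of `M` with the
    -- monomials `b^p` and `c·b^p`:
    (bas : Module.Basis BIdx (ZMod 2) B)
    (hbas₁ : ∀ i j p : ℕ, bas (Sum.inl (i, j), Sum.inl p) = x₂ ^ i * y₂ ^ j * bb ^ p)
    (hbas₂ : ∀ i j p : ℕ, bas (Sum.inl (i, j), Sum.inr p) = x₂ ^ i * y₂ ^ j * c * bb ^ p)
    (hbas₃ : ∀ n m p : ℕ, bas (Sum.inr (n, m), Sum.inl p) = θ n m * bb ^ p)
    (hbas₄ : ∀ n m p : ℕ, bas (Sum.inr (n, m), Sum.inr p) = θ n m * c * bb ^ p)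
    -- the `ℤ×ℤ`-grading of `B`, for which each of the above basis elements is homogeneous
    -- of the expected degree:
    (𝒜 : ℤ × ℤ → Submodule (ZMod 2) B) [GradedAlgebra 𝒜]
    (hdeg : ∀ k : BIdx, bas k ∈ 𝒜 (bdeg k))
    :
    ∀ a : ℤ, 𝒜 (a, a - 1) = ⊥ ∧ 𝒜 (a, a - 2) = ⊥ :=
  component_eq_bot_of_gap_general B bas 𝒜 hdeg
end

section
/- For all integers a, b with b < 0 and a ≤ b + 2, the homogeneous component of B in bidegree (a, b) is zero. -/
theorem Submodule.eq_bot_of_span_homogeneous_of_deg_ne {ι κ R M : Type*} [DecidableEq ι]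
    [Semiring R] [AddCommMonoid M] [Module R M] (𝒜 : ι → Submodule R M)
    [DirectSum.Decomposition 𝒜] (v : κ → M) (hv : Submodule.span R (Set.range v) = ⊤)
    (deg : κ → ι) (hdeg : ∀ k, v k ∈ 𝒜 (deg k)) (i : ι) (hi : ∀ k, deg k ≠ i) :
    𝒜 i = ⊥ := by
  have hle : 𝒜 i ≤ ⨆ j ∈ ({i}ᶜ : Set ι), 𝒜 j := by
    calc 𝒜 i ≤ Submodule.span R (Set.range v) := hv ▸ le_top
      _ ≤ ⨆ j ∈ ({i}ᶜ : Set ι), 𝒜 j := by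
        rw [Submodule.span_le]
        rintro _ ⟨k, rfl⟩
        exact Submodule.mem_iSup_of_mem (deg k) (Submodule.mem_iSup_of_mem (hi k) (hdeg k))
  have hdisj := (DirectSum.Decomposition.isInternal 𝒜).submodule_iSupIndep.disjoint_biSup
    (Set.notMem_compl_iff.mpr (Set.mem_singleton i))
  exact disjoint_self.mp (hdisj.mono_right hle)

theorem bdeg_snd_nonneg_or_snd_add_two_lt_fst (k : BIdx) :
    0 ≤ (bdeg k).2 ∨ (bdeg k).2 + 2 < (bdeg k).1 := by
  rcases k with ⟨⟨i, j⟩ | ⟨n, m⟩, p | p⟩ <;> simp only [bdeg] <;> omega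

theorem component_eq_bot_of_neg_weight_general
    -- `B = M[c,b]/(c² - x₂·c - y₂·b)` is a commutative graded `M`-algebra:
    (B : Type) [CommRing B] [Algebra (ZMod 2) B]
    -- `B` is free over `ℤ/2` on the products of basis elements of `M` with the
    -- monomials `b^p` and `c·b^p`:
    (bas : Module.Basis BIdx (ZMod 2) B)
    -- the `ℤ×ℤ`-grading of `B`, for which each of the above basis elements is homogeneous
    -- of the expected degree:
    (𝒜 : ℤ × ℤ → Submodule (ZMod 2) B) [GradedAlgebra 𝒜]
    (hdeg : ∀ k : BIdx, bas k ∈ 𝒜 (bdeg k))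
    :
    ∀ a b : ℤ, b < 0 → a ≤ b + 2 → 𝒜 (a, b) = ⊥ := by
  intro a b hb hab
  refine Submodule.eq_bot_of_span_homogeneous_of_deg_ne 𝒜 bas bas.span_eq bdeg hdeg (a, b)
    fun k hk => ?_
  have hk' := bdeg_snd_nonneg_or_snd_add_two_lt_fst k
  rw [hk] at hk'
  omega

/-- (First part of Corollary 2.14 of the paper.)  For all integers `a, b`
with `b < 0` and `a ≤ b + 2`, the homogeneous component of `B` in bidegree `(a, b)` is
zero. -/
theorem component_eq_bot_of_neg_weight
    -- `M` is Stong's `RO(C₂)`-graded Bredon cohomology ring of a point: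
    -- a commutative `ℤ/2`-algebra, free on the basis `x₂^i·y₂^j`, `θ₂/(x₂^n·y₂^m)` ...
    (M : Type) [CommRing M] [Algebra (ZMod 2) M]
    (basM : Module.Basis MIdx (ZMod 2) M)
    (hMone : basM (Sum.inl (0, 0)) = 1)
    -- ... with positive-cone elements multiplying as monomials in `F₂[x₂,y₂]` ...
    (hMmul₁ : ∀ i j i' j' : ℕ,
      basM (Sum.inl (i, j)) * basM (Sum.inl (i', j')) = basM (Sum.inl (i + i', j + j')))
    -- ... with `x₂^i·y₂^j · θ₂/(x₂^n·y₂^m) = θ₂/(x₂^{n-i}·y₂^{m-j})` if `i ≤ n` and `j ≤ m`,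
    -- and `= 0` otherwise ...
    (hMmul₂ : ∀ i j n m : ℕ,
      basM (Sum.inl (i, j)) * basM (Sum.inr (n, m)) =
        if i ≤ n ∧ j ≤ m then basM (Sum.inr (n - i, m - j)) else 0)
    -- ... and with the product of any two negative-cone basis elements equal to `0`.
    (hMmul₃ : ∀ nm nm' : ℕ × ℕ, basM (Sum.inr nm) * basM (Sum.inr nm') = 0)
    -- `B = M[c,b]/(c² - x₂·c - y₂·b)` is a commutative graded `M`-algebra:
    (B : Type) [CommRing B] [Algebra (ZMod 2) B] [Algebra M B]
    (x₂ y₂ c bb : B) (θ : ℕ → ℕ → B)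
    (hx₂ : ∀ i j : ℕ, algebraMap M B (basM (Sum.inl (i, j))) = x₂ ^ i * y₂ ^ j)
    (hθ : ∀ n m : ℕ, algebraMap M B (basM (Sum.inr (n, m))) = θ n m)
    (hrel : c ^ 2 - x₂ * c - y₂ * bb = 0)
    -- `B` is free over `ℤ/2` on the products of basis elements of `M` with the
    -- monomials `b^p` and `c·b^p`:
    (bas : Module.Basis BIdx (ZMod 2) B)
    (hbas₁ : ∀ i j p : ℕ, bas (Sum.inl (i, j), Sum.inl p) = x₂ ^ i * y₂ ^ j * bb ^ p)
    (hbas₂ : ∀ i j p : ℕ, bas (Sum.inl (i, j), Sum.inr p) = x₂ ^ i * y₂ ^ j * c * bb ^ p)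
    (hbas₃ : ∀ n m p : ℕ, bas (Sum.inr (n, m), Sum.inl p) = θ n m * bb ^ p)
    (hbas₄ : ∀ n m p : ℕ, bas (Sum.inr (n, m), Sum.inr p) = θ n m * c * bb ^ p)
    -- the `ℤ×ℤ`-grading of `B`, for which each of the above basis elements is homogeneous
    -- of the expected degree:
    (𝒜 : ℤ × ℤ → Submodule (ZMod 2) B) [GradedAlgebra 𝒜]
    (hdeg : ∀ k : BIdx, bas k ∈ 𝒜 (bdeg k))
    :
    ∀ a b : ℤ, b < 0 → a ≤ b + 2 → 𝒜 (a, b) = ⊥ :=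
  component_eq_bot_of_neg_weight_general B bas 𝒜 hdeg
end

section
/- The homogeneous component of B in bidegree (a, 0) is: the one-dimensional F₂-line spanned by 1 when a = 0; zero for every a ≤ 2 with a ≠ 0; one-dimensional over F₂, spanned by the nonzero element θ₂·c·b, when a = 3; and nonzero for every a ≥ 4, containing the nonzero element (θ₂/x₂^{a−4})·b^{a−2}. -/
namespace Module.Basis

variable {ι κ R M : Type*} [DecidableEq κ] [Semiring R] [AddCommMonoid M] [Module R M]

theorem span_image_preimage_eq_of_mem (𝒜 : κ → Submodule R M) [DirectSum.Decomposition 𝒜]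
    (b : Basis ι R M) (deg : ι → κ) (hdeg : ∀ i, b i ∈ 𝒜 (deg i)) (d : κ) :
    Submodule.span R (b '' (deg ⁻¹' {d})) = 𝒜 d := by
  refine le_antisymm (Submodule.span_le.2 ?_) fun x hx => ?_
  · rintro _ ⟨i, rfl, rfl⟩
    exact hdeg i
  · suffices h : ∀ y : M,
        (DirectSum.decompose 𝒜 y d : M) ∈ Submodule.span R (b '' (deg ⁻¹' {d})) by
      simpa only [DirectSum.decompose_of_mem_same 𝒜 hx] using h x
    intro y
    induction b.span_eq ▸ Submodule.mem_top (x := y) using Submodule.span_induction with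
    | mem _ hy =>
      obtain ⟨i, rfl⟩ := hy
      by_cases hi : deg i = d
      · rw [DirectSum.decompose_of_mem_same 𝒜 (hi ▸ hdeg i)]
        exact Submodule.subset_span ⟨i, hi, rfl⟩
      · rw [DirectSum.decompose_of_mem_ne 𝒜 (hdeg i) hi]
        exact Submodule.zero_mem _
    | zero => simp only [DirectSum.decompose_zero, DirectSum.zero_apply, ZeroMemClass.coe_zero,
        Submodule.zero_mem]
    | add y z _ _ hy hz => simpa only [DirectSum.decompose_add, DirectSum.add_apply,
        Submodule.coe_add] using add_mem hy hz
    | smul r y _ hy => simpa only [DirectSum.decompose_smul, DirectSum.smul_apply,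
        Submodule.coe_smul] using Submodule.smul_mem _ r hy

end Module.Basis

theorem bdeg_preimage_zero : bdeg ⁻¹' {(0, 0)} = {(Sum.inl (0, 0), Sum.inl 0)} := by
  ext ⟨⟨i, j⟩ | ⟨n, m⟩, p | p⟩ <;>
    simp only [Set.mem_preimage, bdeg, Set.mem_singleton_iff, Prod.ext_iff, Sum.inl.injEq,
      reduceCtorEq, and_false, false_and, and_self, iff_false, not_and] <;>
    omega

theorem bdeg_preimage_eq_empty {a : ℤ} (ha : a ≤ 2) (ha0 : a ≠ 0) : bdeg ⁻¹' {(a, 0)} = ∅ := by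
  ext ⟨⟨i, j⟩ | ⟨n, m⟩, p | p⟩ <;>
    simp only [Set.mem_preimage, bdeg, Set.mem_singleton_iff, Set.mem_empty_iff_false,
      Prod.ext_iff, iff_false, not_and] <;>
    omega

theorem bdeg_preimage_three : bdeg ⁻¹' {(3, 0)} = {(Sum.inr (0, 0), Sum.inr 1)} := by
  ext ⟨⟨i, j⟩ | ⟨n, m⟩, p | p⟩ <;>
    simp only [Set.mem_preimage, bdeg, Set.mem_singleton_iff, Prod.ext_iff, Sum.inr.injEq,
      reduceCtorEq, and_false, false_and, and_self, iff_false, not_and] <;>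
    omega

theorem bdeg_theta_mul_b_pow {a : ℤ} (ha : 4 ≤ a) :
    bdeg (Sum.inr ((a - 4).toNat, 0), Sum.inl (a - 2).toNat) = (a, 0) := by
  simp only [bdeg, Prod.mk.injEq, Nat.cast_zero]
  omega

theorem component_integer_degrees_general
    -- `B = M[c,b]/(c² - x₂·c - y₂·b)` is a commutative graded `M`-algebra:
    (B : Type) [CommRing B] [Algebra (ZMod 2) B]
    (x₂ y₂ c bb : B) (θ : ℕ → ℕ → B)
    -- `B` is free over `ℤ/2` on the products of basis elements of `M` with the
    -- monomials `b^p` and `c·b^p`: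
    (bas : Module.Basis BIdx (ZMod 2) B)
    (hbas₁ : ∀ i j p : ℕ, bas (Sum.inl (i, j), Sum.inl p) = x₂ ^ i * y₂ ^ j * bb ^ p)
    (hbas₃ : ∀ n m p : ℕ, bas (Sum.inr (n, m), Sum.inl p) = θ n m * bb ^ p)
    (hbas₄ : ∀ n m p : ℕ, bas (Sum.inr (n, m), Sum.inr p) = θ n m * c * bb ^ p)
    -- the `ℤ×ℤ`-grading of `B`, for which each of the above basis elements is homogeneous
    -- of the expected degree:
    (𝒜 : ℤ × ℤ → Submodule (ZMod 2) B) [GradedAlgebra 𝒜]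
    (hdeg : ∀ k : BIdx, bas k ∈ 𝒜 (bdeg k))
    :
    (𝒜 (0, 0) = Submodule.span (ZMod 2) {(1 : B)} ∧ (1 : B) ≠ 0) ∧
    (∀ a : ℤ, a ≤ 2 → a ≠ 0 → 𝒜 (a, 0) = ⊥) ∧
    (𝒜 (3, 0) = Submodule.span (ZMod 2) {θ 0 0 * c * bb} ∧ θ 0 0 * c * bb ≠ 0) ∧
    (∀ a : ℤ, 4 ≤ a →
      θ (a - 4).toNat 0 * bb ^ (a - 2).toNat ≠ 0 ∧
      θ (a - 4).toNat 0 * bb ^ (a - 2).toNat ∈ 𝒜 (a, 0) ∧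
      𝒜 (a, 0) ≠ ⊥) := by
  have hspan d := (bas.span_image_preimage_eq_of_mem 𝒜 bdeg hdeg d).symm
  have hone : bas (Sum.inl (0, 0), Sum.inl 0) = 1 := by rw [hbas₁]; ring
  have hθcb : bas (Sum.inr (0, 0), Sum.inr 1) = θ 0 0 * c * bb := by rw [hbas₄, pow_one]
  refine ⟨⟨?_, hone ▸ bas.ne_zero _⟩, fun a ha ha0 => ?_, ⟨?_, hθcb ▸ bas.ne_zero _⟩,
    fun a ha => ?_⟩
  · rw [hspan, bdeg_preimage_zero, Set.image_singleton, hone]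
  · rw [hspan, bdeg_preimage_eq_empty ha ha0, Set.image_empty, Submodule.span_empty]
  · rw [hspan, bdeg_preimage_three, Set.image_singleton, hθcb]
  · have hmem := hdeg (Sum.inr ((a - 4).toNat, 0), Sum.inl (a - 2).toNat)
    have hne := bas.ne_zero (Sum.inr ((a - 4).toNat, 0), Sum.inl (a - 2).toNat)
    rw [hbas₃, bdeg_theta_mul_b_pow ha] at hmem
    rw [hbas₃] at hne
    exact ⟨hne, hmem, (Submodule.ne_bot_iff _).2 ⟨_, hmem, hne⟩⟩

/-- The homogeneous component of `B` in bidegree `(a, 0)` is:  the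
one-dimensional `F₂`-line spanned by `1` when `a = 0`;  zero for every `a ≤ 2` with `a ≠ 0`;
one-dimensional over `F₂`, spanned by the nonzero element `θ₂·c·b`, when `a = 3`;  and
nonzero for every `a ≥ 4`, containing the nonzero element `(θ₂/x₂^{a-4})·b^{a-2}`.
(This combines the second part of Corollary 2.14 with the refinement in the proof of
Corollary 5.4 of the paper.) -/
theorem component_integer_degrees
    -- `M` is Stong's `RO(C₂)`-graded Bredon cohomology ring of a point:
    -- a commutative `ℤ/2`-algebra, free on the basis `x₂^i·y₂^j`, `θ₂/(x₂^n·y₂^m)` ...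
    (M : Type) [CommRing M] [Algebra (ZMod 2) M]
    (basM : Module.Basis MIdx (ZMod 2) M)
    (hMone : basM (Sum.inl (0, 0)) = 1)
    -- ... with positive-cone elements multiplying as monomials in `F₂[x₂,y₂]` ...
    (hMmul₁ : ∀ i j i' j' : ℕ,
      basM (Sum.inl (i, j)) * basM (Sum.inl (i', j')) = basM (Sum.inl (i + i', j + j')))
    -- ... with `x₂^i·y₂^j · θ₂/(x₂^n·y₂^m) = θ₂/(x₂^{n-i}·y₂^{m-j})` if `i ≤ n` and `j ≤ m`,
    -- and `= 0` otherwise ...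
    (hMmul₂ : ∀ i j n m : ℕ,
      basM (Sum.inl (i, j)) * basM (Sum.inr (n, m)) =
        if i ≤ n ∧ j ≤ m then basM (Sum.inr (n - i, m - j)) else 0)
    -- ... and with the product of any two negative-cone basis elements equal to `0`.
    (hMmul₃ : ∀ nm nm' : ℕ × ℕ, basM (Sum.inr nm) * basM (Sum.inr nm') = 0)
    -- `B = M[c,b]/(c² - x₂·c - y₂·b)` is a commutative graded `M`-algebra:
    (B : Type) [CommRing B] [Algebra (ZMod 2) B] [Algebra M B]
    (x₂ y₂ c bb : B) (θ : ℕ → ℕ → B)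
    (hx₂ : ∀ i j : ℕ, algebraMap M B (basM (Sum.inl (i, j))) = x₂ ^ i * y₂ ^ j)
    (hθ : ∀ n m : ℕ, algebraMap M B (basM (Sum.inr (n, m))) = θ n m)
    (hrel : c ^ 2 - x₂ * c - y₂ * bb = 0)
    -- `B` is free over `ℤ/2` on the products of basis elements of `M` with the
    -- monomials `b^p` and `c·b^p`:
    (bas : Module.Basis BIdx (ZMod 2) B)
    (hbas₁ : ∀ i j p : ℕ, bas (Sum.inl (i, j), Sum.inl p) = x₂ ^ i * y₂ ^ j * bb ^ p)
    (hbas₂ : ∀ i j p : ℕ, bas (Sum.inl (i, j), Sum.inr p) = x₂ ^ i * y₂ ^ j * c * bb ^ p)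
    (hbas₃ : ∀ n m p : ℕ, bas (Sum.inr (n, m), Sum.inl p) = θ n m * bb ^ p)
    (hbas₄ : ∀ n m p : ℕ, bas (Sum.inr (n, m), Sum.inr p) = θ n m * c * bb ^ p)
    -- the `ℤ×ℤ`-grading of `B`, for which each of the above basis elements is homogeneous
    -- of the expected degree:
    (𝒜 : ℤ × ℤ → Submodule (ZMod 2) B) [GradedAlgebra 𝒜]
    (hdeg : ∀ k : BIdx, bas k ∈ 𝒜 (bdeg k))
    :
    (𝒜 (0, 0) = Submodule.span (ZMod 2) {(1 : B)} ∧ (1 : B) ≠ 0) ∧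
    (∀ a : ℤ, a ≤ 2 → a ≠ 0 → 𝒜 (a, 0) = ⊥) ∧
    (𝒜 (3, 0) = Submodule.span (ZMod 2) {θ 0 0 * c * bb} ∧ θ 0 0 * c * bb ≠ 0) ∧
    (∀ a : ℤ, 4 ≤ a →
      θ (a - 4).toNat 0 * bb ^ (a - 2).toNat ≠ 0 ∧
      θ (a - 4).toNat 0 * bb ^ (a - 2).toNat ∈ 𝒜 (a, 0) ∧
      𝒜 (a, 0) ≠ ⊥) :=
  component_integer_degrees_general B x₂ y₂ c bb θ bas hbas₁ hbas₃ hbas₄ 𝒜 hdeg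
end
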